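/- arXiv:2601.07842 — 2 statements merged into one kernel-verified Lean document; each statement's English description precedes it below -/
import Mathlib

section
/- Let α ∈ (0, 3] and let f ∈ F(α). Then (1 + |z|)^{−α} ≤ |f'(z)| ≤ (1 − |z|)^{−α} for all z ∈ 𝔻. -/
/-!
Set `p = 1 + (2/α) z f''/f'`. The hypothesis says exactly that `Re p > 0`, and `p 0 = 1`, so
Schwarz's lemma applied to the Cayley transform `(p - 1)/(p + 1)` gives Harnack's inequality
`(1 - r)/(1 + r) ≤ Re p(z) ≤ (1 + r)/(1 - r)` for `|z| = r`, i.e.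
`-α r/(1 + r) ≤ Re (z f''/f') ≤ α r/(1 - r)`. Along the segment `s ↦ s z` the derivative of
`log |f'(s z)|` is `Re (z f''(s z)/f'(s z))`; comparing it with the derivatives of
`-α log (1 ± s r)` and integrating over `s ∈ [0, 1]` gives the two bounds, since `f'(0) = 1`.
-/

open Complex Metric

/-- Membership in the family `F(α)`. -/
def MemF (α : ℝ) (h : ℂ → ℂ) : Prop :=
  DifferentiableOn ℂ h (ball 0 1) ∧ h 0 = 0 ∧ deriv h 0 = 1 ∧
  (∀ z ∈ ball (0:ℂ) 1, deriv h z ≠ 0) ∧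
  (∀ z ∈ ball (0:ℂ) 1, 1 - α / 2 < (1 + z * deriv (deriv h) z / deriv h z).re)

theorem norm_sub_one_lt_norm_add_one {x : ℂ} (hx : 0 < x.re) : ‖x - 1‖ < ‖x + 1‖ := by
  apply lt_of_pow_lt_pow_left₀ 2 (norm_nonneg _)
  simp only [Complex.sq_norm, Complex.normSq_apply, Complex.sub_re, Complex.sub_im,
    Complex.add_re, Complex.add_im, Complex.one_re, Complex.one_im]
  nlinarith

theorem re_mem_of_norm_sub_one_le {x : ℂ} {r : ℝ} (hr0 : 0 ≤ r) (hr1 : r < 1)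
    (hx : ‖x - 1‖ ≤ r * ‖x + 1‖) :
    (1 - r) / (1 + r) ≤ x.re ∧ x.re ≤ (1 + r) / (1 - r) := by
  have hsq : ‖x - 1‖ ^ 2 ≤ r ^ 2 * ‖x + 1‖ ^ 2 := by
    rw [← mul_pow]; exact pow_le_pow_left₀ (norm_nonneg _) hx 2
  simp only [Complex.sq_norm, Complex.normSq_apply, Complex.sub_re, Complex.sub_im,
    Complex.add_re, Complex.add_im, Complex.one_re, Complex.one_im] at hsq
  -- the two factors vanish at the endpoints of the segment cut out of the real axis by the disc
  have hprod : ((1 + r) * x.re - (1 - r)) * ((1 - r) * x.re - (1 + r)) ≤ 0 := by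
    nlinarith [mul_nonneg (by nlinarith : (0:ℝ) ≤ 1 - r ^ 2) (sq_nonneg x.im)]
  constructor
  · rw [div_le_iff₀ (by linarith)]
    by_contra! h
    nlinarith [mul_pos_of_neg_of_neg (by linarith : (1 + r) * x.re - (1 - r) < 0)
      (by nlinarith : (1 - r) * x.re - (1 + r) < 0)]
  · rw [le_div_iff₀ (by linarith)]
    by_contra! h
    nlinarith [mul_pos (by nlinarith : 0 < (1 + r) * x.re - (1 - r))
      (by linarith : 0 < (1 - r) * x.re - (1 + r))]

/-- Schwarz's lemma applied to the Cayley transform `(p - 1) / (p + 1)`. -/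
theorem norm_sub_one_le_norm_mul_norm_add_one {p : ℂ → ℂ}
    (hp : DifferentiableOn ℂ p (ball 0 1)) (hp0 : p 0 = 1)
    (hre : ∀ w ∈ ball (0:ℂ) 1, 0 < (p w).re) {w : ℂ} (hw : w ∈ ball (0:ℂ) 1) :
    ‖p w - 1‖ ≤ ‖w‖ * ‖p w + 1‖ := by
  have hlt : ∀ v ∈ ball (0:ℂ) 1, ‖p v - 1‖ < ‖p v + 1‖ :=
    fun v hv => norm_sub_one_lt_norm_add_one (hre v hv)
  have hne : ∀ v ∈ ball (0:ℂ) 1, p v + 1 ≠ 0 :=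
    fun v hv => norm_pos_iff.mp ((norm_nonneg _).trans_lt (hlt v hv))
  have hmaps : Set.MapsTo (fun v => (p v - 1) / (p v + 1)) (ball 0 1) (closedBall 0 1) := by
    intro v hv
    rw [mem_closedBall_zero_iff, norm_div]
    exact div_le_one_of_le₀ (hlt v hv).le (norm_nonneg _)
  have hschwarz := Complex.norm_le_norm_of_mapsTo_ball
    ((hp.sub_const 1).div (hp.add_const 1) hne) hmaps (by simp [hp0]) (mem_ball_zero_iff.mp hw)
  rwa [Pi.div_apply, norm_div, div_le_iff₀ (norm_pos_iff.mpr (hne w hw))] at hschwarz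

theorem harnack_re_of_re_pos {p : ℂ → ℂ} (hp : DifferentiableOn ℂ p (ball 0 1)) (hp0 : p 0 = 1)
    (hre : ∀ w ∈ ball (0:ℂ) 1, 0 < (p w).re) {w : ℂ} (hw : w ∈ ball (0:ℂ) 1) :
    (1 - ‖w‖) / (1 + ‖w‖) ≤ (p w).re ∧ (p w).re ≤ (1 + ‖w‖) / (1 - ‖w‖) :=
  re_mem_of_norm_sub_one_le (norm_nonneg w) (mem_ball_zero_iff.mp hw)
    (norm_sub_one_le_norm_mul_norm_add_one hp hp0 hre hw)

theorem HasDerivAt.log_norm {g : ℝ → ℂ} {d : ℂ} {t : ℝ} (hg : HasDerivAt g d t)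
    (h0 : g t ≠ 0) : HasDerivAt (fun s => Real.log ‖g s‖) (d / g t).re t := by
  have hpos : 0 < ‖g t‖ := norm_pos_iff.mpr h0
  have hlog : (fun s => Real.log ‖g s‖) = fun s => Real.log (‖g s‖ ^ 2) / 2 := by
    funext s
    rw [Real.log_pow]
    ring
  rw [hlog]
  refine ((hg.norm_sq.log (by positivity)).div_const 2).congr_deriv ?_
  rw [Complex.div_re, Complex.inner, ← Complex.sq_norm]
  field_simp
  simp

theorem hasDerivAt_log_norm_comp_ofReal_mul {g : ℂ → ℂ} {z : ℂ} {s : ℝ}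
    (hg : DifferentiableAt ℂ g (s * z)) (hne : g (s * z) ≠ 0) :
    HasDerivAt (fun s : ℝ => Real.log ‖g (s * z)‖) (z * deriv g (s * z) / g (s * z)).re s := by
  have hline : HasDerivAt (fun w : ℂ => g (w * z)) (deriv g (s * z) * z) s :=
    hg.hasDerivAt.comp_of_eq (s : ℂ) ((hasDerivAt_id _).mul_const z) (by simp) |>.congr_deriv
      (by simp)
  simpa only [mul_comm z] using hline.comp_ofReal.log_norm hne

theorem sub_le_sub_of_hasDerivAt_le {φ ψ φ' ψ' : ℝ → ℝ} {a b : ℝ} (hab : a ≤ b)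
    (hφ : ∀ t ∈ Set.Icc a b, HasDerivAt φ (φ' t) t) (hψ : ∀ t ∈ Set.Icc a b, HasDerivAt ψ (ψ' t) t)
    (hle : ∀ t ∈ Set.Ioo a b, φ' t ≤ ψ' t) : φ b - φ a ≤ ψ b - ψ a := by
  have hd : ∀ t ∈ Set.Icc a b, HasDerivAt (ψ - φ) (ψ' t - φ' t) t :=
    fun t ht => (hψ t ht).sub (hφ t ht)
  have hmono : MonotoneOn (ψ - φ) (Set.Icc a b) := by
    refine monotoneOn_of_hasDerivWithinAt_nonneg (f' := ψ' - φ') (convex_Icc a b)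
      (fun t ht => (hd t ht).continuousAt.continuousWithinAt) (fun t ht => ?_) (fun t ht => ?_)
    · rw [interior_Icc] at ht
      exact (hd t (Set.Ioo_subset_Icc_self ht)).hasDerivWithinAt
    · rw [interior_Icc] at ht
      exact sub_nonneg.mpr (hle t ht)
  have := hmono (Set.left_mem_Icc.mpr hab) (Set.right_mem_Icc.mpr hab) hab
  simp only [Pi.sub_apply] at this
  linarith

theorem norm_bounds_of_re_mul_deriv_div_bounds {g : ℂ → ℂ} {α : ℝ}
    (hg : DifferentiableOn ℂ g (ball 0 1)) (hne : ∀ w ∈ ball (0:ℂ) 1, g w ≠ 0) (hg0 : g 0 = 1)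
    (hre : ∀ w ∈ ball (0:ℂ) 1, -α * ‖w‖ / (1 + ‖w‖) ≤ (w * deriv g w / g w).re ∧
      (w * deriv g w / g w).re ≤ α * ‖w‖ / (1 - ‖w‖))
    {z : ℂ} (hz : z ∈ ball (0:ℂ) 1) :
    (1 + ‖z‖) ^ (-α) ≤ ‖g z‖ ∧ ‖g z‖ ≤ (1 - ‖z‖) ^ (-α) := by
  set r := ‖z‖
  have hr1 : r < 1 := mem_ball_zero_iff.mp hz
  have hnorm : ∀ s ∈ Set.Icc (0:ℝ) 1, ‖(s : ℂ) * z‖ = s * r := fun s hs => by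
    rw [norm_mul, Complex.norm_real, Real.norm_of_nonneg hs.1]
  have hmem : ∀ s ∈ Set.Icc (0:ℝ) 1, (s : ℂ) * z ∈ ball (0:ℂ) 1 := fun s hs => by
    rw [mem_ball_zero_iff, hnorm s hs]
    nlinarith [hs.1, hs.2, norm_nonneg z]
  have hlog : ∀ s ∈ Set.Icc (0:ℝ) 1, HasDerivAt (fun s : ℝ => Real.log ‖g (s * z)‖)
      (z * deriv g (s * z) / g (s * z)).re s := fun s hs =>
    hasDerivAt_log_norm_comp_ofReal_mul
      ((hg _ (hmem s hs)).differentiableAt (isOpen_ball.mem_nhds (hmem s hs))) (hne _ (hmem s hs))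
  have hscale : ∀ s : ℝ, ((s : ℂ) * z * deriv g (s * z) / g (s * z)).re
      = s * (z * deriv g (s * z) / g (s * z)).re := fun s => by
    rw [mul_assoc, mul_div_assoc, Complex.re_ofReal_mul, mul_div_assoc]
  have hlower : ∀ s ∈ Set.Icc (0:ℝ) 1,
      HasDerivAt (fun s => -α * Real.log (1 + s * r)) (-α * r / (1 + s * r)) s := fun s hs => by
    have h := (((hasDerivAt_id s).mul_const r).const_add 1).log
      (by simp only [id]; nlinarith [hs.1, norm_nonneg z])
    simpa [div_eq_mul_inv, mul_comm, mul_left_comm, mul_assoc] using h.const_mul (-α)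
  have hupper : ∀ s ∈ Set.Icc (0:ℝ) 1,
      HasDerivAt (fun s => -α * Real.log (1 - s * r)) (α * r / (1 - s * r)) s := fun s hs => by
    have h := (((hasDerivAt_id s).mul_const r).const_sub 1).log
      (by simp only [id]; nlinarith [hs.2, norm_nonneg z])
    simpa [div_eq_mul_inv, mul_comm, mul_left_comm, mul_assoc] using h.const_mul (-α)
  have hlower_le : ∀ s ∈ Set.Ioo (0:ℝ) 1,
      -α * r / (1 + s * r) ≤ (z * deriv g (s * z) / g (s * z)).re := fun s hs => by
    have h := (hre _ (hmem s (Set.Ioo_subset_Icc_self hs))).1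
    rw [hnorm s (Set.Ioo_subset_Icc_self hs), hscale] at h
    have e : s * (-α * r / (1 + s * r)) = -α * (s * r) / (1 + s * r) := by ring
    exact le_of_mul_le_mul_left (e.trans_le h) hs.1
  have hupper_le : ∀ s ∈ Set.Ioo (0:ℝ) 1,
      (z * deriv g (s * z) / g (s * z)).re ≤ α * r / (1 - s * r) := fun s hs => by
    have h := (hre _ (hmem s (Set.Ioo_subset_Icc_self hs))).2
    rw [hnorm s (Set.Ioo_subset_Icc_self hs), hscale] at h
    have e : s * (α * r / (1 - s * r)) = α * (s * r) / (1 - s * r) := by ring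
    exact le_of_mul_le_mul_left (h.trans_eq e.symm) hs.1
  have hlow := sub_le_sub_of_hasDerivAt_le zero_le_one hlower hlog hlower_le
  have hup := sub_le_sub_of_hasDerivAt_le zero_le_one hlog hupper hupper_le
  simp only [Complex.ofReal_one, Complex.ofReal_zero, one_mul, zero_mul, hg0, norm_one,
    Real.log_one, add_zero, sub_zero, mul_zero] at hlow hup
  have hgz : 0 < ‖g z‖ := norm_pos_iff.mpr (hne z hz)
  constructor
  · rw [← Real.log_le_log_iff (by positivity) hgz, Real.log_rpow (by positivity)]
    linarith
  · rw [← Real.log_le_log_iff hgz (Real.rpow_pos_of_pos (by linarith) _),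
      Real.log_rpow (by linarith)]
    linarith

theorem MemF.pos {α : ℝ} {f : ℂ → ℂ} (hF : MemF α f) : 0 < α := by
  have h := hF.2.2.2.2 0 (mem_ball_self one_pos)
  simp only [zero_mul, zero_div, add_zero, Complex.one_re] at h
  linarith

theorem MemF.re_mul_deriv_div_bounds {α : ℝ} {f : ℂ → ℂ} (hF : MemF α f) {w : ℂ}
    (hw : w ∈ ball (0:ℂ) 1) :
    -α * ‖w‖ / (1 + ‖w‖) ≤ (w * deriv (deriv f) w / deriv f w).re ∧
      (w * deriv (deriv f) w / deriv f w).re ≤ α * ‖w‖ / (1 - ‖w‖) := by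
  have hα := hF.pos
  obtain ⟨hf, -, -, hf'ne, hre⟩ := hF
  have hf' := hf.deriv isOpen_ball
  set p : ℂ → ℂ := fun v => 1 + ((2 / α : ℝ) : ℂ) * (v * deriv (deriv f) v / deriv f v)
  have hp_re : ∀ v, (p v).re = 1 + 2 / α * (v * deriv (deriv f) v / deriv f v).re := fun v => by
    simp only [p, Complex.add_re, Complex.one_re, Complex.re_ofReal_mul]
  have hp : DifferentiableOn ℂ p (ball 0 1) :=
    ((differentiableOn_id.mul (hf'.deriv isOpen_ball)).div hf' hf'ne).const_mul _ |>.const_add 1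
  have hp_pos : ∀ v ∈ ball (0:ℂ) 1, 0 < (p v).re := fun v hv => by
    have h := hre v hv
    rw [Complex.add_re, Complex.one_re] at h
    rw [hp_re]
    have : -1 < 2 / α * (v * deriv (deriv f) v / deriv f v).re := by
      rw [div_mul_eq_mul_div, lt_div_iff₀ hα]
      linarith
    linarith
  obtain ⟨hlow, hup⟩ := harnack_re_of_re_pos hp (by simp [p]) hp_pos hw
  rw [hp_re] at hlow hup
  have hw1 : ‖w‖ < 1 := mem_ball_zero_iff.mp hw
  set x := (w * deriv (deriv f) w / deriv f w).re
  constructor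
  · calc -α * ‖w‖ / (1 + ‖w‖) = α / 2 * ((1 - ‖w‖) / (1 + ‖w‖) - 1) := by
          field_simp; ring
      _ ≤ α / 2 * (2 / α * x) := by gcongr; linarith
      _ = x := by field_simp
  · calc x = α / 2 * (2 / α * x) := by field_simp
      _ ≤ α / 2 * ((1 + ‖w‖) / (1 - ‖w‖) - 1) := by gcongr; linarith
      _ = α * ‖w‖ / (1 - ‖w‖) := by
          have : 1 - ‖w‖ ≠ 0 := by linarith
          field_simp; ring

theorem stmt13_general (α : ℝ) (f : ℂ → ℂ) (hF : MemF α f) :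
    ∀ z ∈ ball (0:ℂ) 1,
      (1 + ‖z‖) ^ (-α) ≤ ‖deriv f z‖ ∧
      ‖deriv f z‖ ≤ (1 - ‖z‖) ^ (-α) := by
  intro z hz
  have hre := fun w (hw : w ∈ ball (0:ℂ) 1) => hF.re_mul_deriv_div_bounds hw
  obtain ⟨hf, -, hf'0, hf'ne, -⟩ := hF
  exact norm_bounds_of_re_mul_deriv_div_bounds (hf.deriv isOpen_ball) hf'ne hf'0 hre hz

theorem stmt13 (α : ℝ) (hα : α ∈ Set.Ioc (0:ℝ) 3) (f : ℂ → ℂ) (hF : MemF α f) :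
    ∀ z ∈ ball (0:ℂ) 1,
      (1 + ‖z‖) ^ (-α) ≤ ‖deriv f z‖ ∧
      ‖deriv f z‖ ≤ (1 - ‖z‖) ^ (-α) :=
  stmt13_general α f hF
end

section
/- Let α ∈ (0, 3], let h ∈ F(α), let ω be analytic on 𝔻 with |ω(z)| < 1 for all z ∈ 𝔻, and let g be analytic on 𝔻 with g(0) = 0 and g' = ω·h'. Then the harmonic pre-Schwarzian derivative P_f(z) = h''(z)/h'(z) − conj(ω(z))·ω'(z)/(1 − |ω(z)|²) of the harmonic mapping f = h + conj(g) satisfies (1 − |z|²)·|P_f(z)| ≤ 2α + 1 for all z ∈ 𝔻, i.e. ‖P_f‖ ≤ 2α + 1. -/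
open Complex Metric

/-!
For `h ∈ F(α)` the function `z ↦ z h''(z)/h'(z)` has real part `> -α/2` and vanishes at `0`, so the
Borel–Carathéodory theorem gives `(1 - |z|) |h''/h'| ≤ α`, hence `(1 - |z|²) |h''/h'| ≤ 2α`. The
Schwarz–Pick lemma `(1 - |z|²) |ω'| ≤ 1 - |ω|²` bounds the dilatation term of `P_f` by `|ω| < 1`,
and the triangle inequality adds the two bounds.
-/

open ComplexConjugate Set

noncomputable def blaschkeFactor (c u : ℂ) : ℂ := (u - c) / (1 - conj c * u)

lemma normSq_one_sub_conj_mul_sub_normSq_sub (c u : ℂ) :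
    normSq (1 - conj c * u) - normSq (u - c) = (1 - normSq c) * (1 - normSq u) := by
  simp only [normSq_apply, sub_re, sub_im, mul_re, mul_im, one_re, one_im, conj_re, conj_im]
  ring

lemma norm_sub_lt_norm_one_sub_conj_mul {c u : ℂ} (hc : ‖c‖ < 1) (hu : ‖u‖ < 1) :
    ‖u - c‖ < ‖1 - conj c * u‖ := by
  rw [← sq_lt_sq₀ (norm_nonneg _) (norm_nonneg _), Complex.sq_norm, Complex.sq_norm]
  have hc' : normSq c < 1 := by rw [← Complex.sq_norm]; nlinarith [norm_nonneg c]
  have hu' : normSq u < 1 := by rw [← Complex.sq_norm]; nlinarith [norm_nonneg u]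
  nlinarith [normSq_one_sub_conj_mul_sub_normSq_sub c u]

lemma one_sub_conj_mul_ne_zero {c u : ℂ} (hc : ‖c‖ < 1) (hu : ‖u‖ < 1) :
    1 - conj c * u ≠ 0 :=
  norm_pos_iff.mp ((norm_nonneg _).trans_lt (norm_sub_lt_norm_one_sub_conj_mul hc hu))

lemma norm_one_sub_conj_mul_self {c : ℂ} (hc : ‖c‖ < 1) : ‖1 - conj c * c‖ = 1 - ‖c‖ ^ 2 := by
  rw [conj_mul', ← ofReal_pow, ← ofReal_one, ← ofReal_sub, norm_real, Real.norm_eq_abs,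
    abs_of_pos (by nlinarith [norm_nonneg c])]

lemma mapsTo_blaschkeFactor {c : ℂ} (hc : ‖c‖ < 1) :
    MapsTo (blaschkeFactor c) (ball 0 1) (ball 0 1) := by
  intro u hu
  rw [mem_ball_zero_iff] at hu ⊢
  rw [blaschkeFactor, norm_div, div_lt_one (norm_pos_iff.mpr (one_sub_conj_mul_ne_zero hc hu))]
  exact norm_sub_lt_norm_one_sub_conj_mul hc hu

lemma hasDerivAt_blaschkeFactor {c u : ℂ} (hu : 1 - conj c * u ≠ 0) :
    HasDerivAt (blaschkeFactor c) ((1 - conj c * c) / (1 - conj c * u) ^ 2) u := by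
  refine HasDerivAt.congr_deriv (f := blaschkeFactor c)
    (((hasDerivAt_id u).sub_const c).div (((hasDerivAt_id u).const_mul (conj c)).const_sub 1) hu) ?_
  simp only [id]
  ring

lemma differentiableOn_blaschkeFactor {c : ℂ} (hc : ‖c‖ < 1) :
    DifferentiableOn ℂ (blaschkeFactor c) (ball 0 1) := fun _ hu =>
  (hasDerivAt_blaschkeFactor
    (one_sub_conj_mul_ne_zero hc (mem_ball_zero_iff.mp hu))).differentiableAt.differentiableWithinAt

/-- Schwarz–Pick lemma: composing with disc automorphisms moving `a` and `ω a` to `0` reduces it to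
the Schwarz lemma at the origin. -/
theorem one_sub_sq_norm_mul_norm_deriv_le {ω : ℂ → ℂ} (hω : DifferentiableOn ℂ ω (ball 0 1))
    (hmaps : MapsTo ω (ball 0 1) (ball 0 1)) {a : ℂ} (ha : a ∈ ball (0:ℂ) 1) :
    (1 - ‖a‖ ^ 2) * ‖deriv ω a‖ ≤ 1 - ‖ω a‖ ^ 2 := by
  have ha1 : ‖a‖ < 1 := mem_ball_zero_iff.mp ha
  have ha1' : ‖-a‖ < 1 := by rwa [norm_neg]
  have hb1 : ‖ω a‖ < 1 := mem_ball_zero_iff.mp (hmaps ha)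
  set φ := blaschkeFactor (ω a) ∘ ω ∘ blaschkeFactor (-a)
  have hM0 : blaschkeFactor (-a) 0 = a := by simp [blaschkeFactor]
  have hφ0 : φ 0 = 0 := by simp [φ, blaschkeFactor]
  have hφmaps : MapsTo φ (ball 0 1) (ball 0 1) :=
    (mapsTo_blaschkeFactor hb1).comp (hmaps.comp (mapsTo_blaschkeFactor ha1'))
  have hφdiff : DifferentiableOn ℂ φ (ball 0 1) :=
    (differentiableOn_blaschkeFactor hb1).comp
      (hω.comp (differentiableOn_blaschkeFactor ha1') (mapsTo_blaschkeFactor ha1'))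
      (hmaps.comp (mapsTo_blaschkeFactor ha1'))
  have hMder : HasDerivAt (blaschkeFactor (-a)) (1 - conj a * a) 0 := by
    simpa using hasDerivAt_blaschkeFactor (c := -a) (u := 0) (by simp)
  have hωder : HasDerivAt ω (deriv ω a) (blaschkeFactor (-a) 0) := by
    rw [hM0]
    exact (hω.differentiableAt (isOpen_ball.mem_nhds ha)).hasDerivAt
  have hBder : HasDerivAt (blaschkeFactor (ω a)) (1 - conj (ω a) * ω a)⁻¹
      ((ω ∘ blaschkeFactor (-a)) 0) := by
    rw [Function.comp_apply, hM0]
    have hne := one_sub_conj_mul_ne_zero hb1 hb1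
    simpa [sq, hne] using hasDerivAt_blaschkeFactor hne
  have hschwarz : ‖deriv φ 0‖ ≤ 1 :=
    norm_deriv_le_one_of_mapsTo_ball (c := 0) hφdiff
      (by rw [hφ0]; exact hφmaps.mono_right ball_subset_closedBall) one_pos
  rw [(hBder.comp 0 (hωder.comp 0 hMder)).deriv, norm_mul, norm_mul, norm_inv,
    norm_one_sub_conj_mul_self hb1, norm_one_sub_conj_mul_self ha1,
    inv_mul_le_iff₀ (by nlinarith [norm_nonneg (ω a)])] at hschwarz
  linarith

theorem norm_mul_one_sub_norm_le_of_neg_lt_re {A : ℂ → ℂ} {M : ℝ}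
    (hA : DifferentiableOn ℂ A (ball 0 1)) (hre : ∀ z ∈ ball (0:ℂ) 1, -M < (z * A z).re)
    {z : ℂ} (hz : z ∈ ball (0:ℂ) 1) : ‖A z‖ * (1 - ‖z‖) ≤ 2 * M := by
  -- Borel–Carathéodory for `-z A(z)` away from `0`, then continuity at `0`.
  have hM : 0 < M := by simpa using hre 0 (mem_ball_self one_pos)
  have hpunct : ∀ w ∈ ball (0:ℂ) 1, w ≠ 0 → ‖A w‖ * (1 - ‖w‖) ≤ 2 * M := by
    intro w hw hw0
    have hr : ‖w‖ < 1 := mem_ball_zero_iff.mp hw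
    have hBC := borelCaratheodory_zero (f := fun v => -(v * A v)) hM
      (differentiableOn_id.mul hA).neg
      (fun v hv => by simpa using (neg_lt.mp (hre v hv)).le) one_pos hw (by simp)
    rw [norm_neg, norm_mul, le_div_iff₀ (by linarith)] at hBC
    nlinarith [norm_pos_iff.mpr hw0]
  rcases eq_or_ne z 0 with rfl | hz0
  · have hcont : ContinuousAt A 0 := hA.continuousOn.continuousAt (ball_mem_nhds 0 one_pos)
    refine le_of_tendsto ((hcont.norm.mul (continuousAt_const.sub continuousAt_id.norm)).tendsto
      |>.mono_left (nhdsWithin_le_nhds (s := {0}ᶜ))) ?_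
    filter_upwards [nhdsWithin_le_nhds (ball_mem_nhds (0:ℂ) one_pos), self_mem_nhdsWithin]
      with w hw hw0 using hpunct w hw hw0
  · exact hpunct z hz hz0

theorem MemF.norm_deriv_deriv_div_deriv_mul_one_sub_norm_le {α : ℝ} {h : ℂ → ℂ} (hF : MemF α h)
    {z : ℂ} (hz : z ∈ ball (0:ℂ) 1) : ‖deriv (deriv h) z / deriv h z‖ * (1 - ‖z‖) ≤ α := by
  obtain ⟨hd, -, -, hne, hre⟩ := hF
  have hh := hd.analyticOnNhd isOpen_ball
  have := norm_mul_one_sub_norm_le_of_neg_lt_re (A := fun w => deriv (deriv h) w / deriv h w)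
    (M := α / 2) (hh.deriv.deriv.differentiableOn.div hh.deriv.differentiableOn hne)
    (fun w hw => by
      have := hre w hw
      rw [mul_div_assoc, add_re, one_re] at this
      linarith) hz
  linarith

theorem one_sub_sq_norm_mul_norm_conj_mul_deriv_div_le {ω : ℂ → ℂ}
    (hω : DifferentiableOn ℂ ω (ball 0 1)) (hω1 : ∀ z ∈ ball (0:ℂ) 1, ‖ω z‖ < 1)
    {z : ℂ} (hz : z ∈ ball (0:ℂ) 1) :
    (1 - ‖z‖ ^ 2) * ‖conj (ω z) * deriv ω z / ((1 - ‖ω z‖ ^ 2 : ℝ) : ℂ)‖ ≤ ‖ω z‖ := by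
  have hpick := one_sub_sq_norm_mul_norm_deriv_le hω
    (fun w hw => mem_ball_zero_iff.mpr (hω1 w hw)) hz
  have hpos : 0 < 1 - ‖ω z‖ ^ 2 := by nlinarith [hω1 z hz, norm_nonneg (ω z)]
  rw [norm_div, norm_mul, norm_conj, norm_real, Real.norm_eq_abs, abs_of_pos hpos,
    mul_div_assoc', mul_left_comm, mul_div_assoc]
  exact mul_le_of_le_one_right (norm_nonneg _) ((div_le_one hpos).mpr hpick)

theorem stmt16_general (α : ℝ) (h : ℂ → ℂ) (hF : MemF α h)
    (ω : ℂ → ℂ) (hω : DifferentiableOn ℂ ω (ball 0 1))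
    (hω1 : ∀ z ∈ ball (0:ℂ) 1, ‖ω z‖ < 1) :
    ∀ z ∈ ball (0:ℂ) 1,
      (1 - ‖z‖ ^ 2) *
        ‖deriv (deriv h) z / deriv h z -
          (starRingEnd ℂ) (ω z) * deriv ω z / ((1 - ‖ω z‖ ^ 2 : ℝ) : ℂ)‖
        ≤ 2 * α + 1 := by
  intro z hz
  have hr : ‖z‖ < 1 := mem_ball_zero_iff.mp hz
  have hpre := hF.norm_deriv_deriv_div_deriv_mul_one_sub_norm_le hz
  have hdil := one_sub_sq_norm_mul_norm_conj_mul_deriv_div_le hω hω1 hz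
  set P := deriv (deriv h) z / deriv h z
  set Q := (starRingEnd ℂ) (ω z) * deriv ω z / ((1 - ‖ω z‖ ^ 2 : ℝ) : ℂ)
  calc (1 - ‖z‖ ^ 2) * ‖P - Q‖ ≤ (1 - ‖z‖ ^ 2) * (‖P‖ + ‖Q‖) := by
        gcongr
        · nlinarith [norm_nonneg z]
        · exact norm_sub_le P Q
    _ = (1 + ‖z‖) * (‖P‖ * (1 - ‖z‖)) + (1 - ‖z‖ ^ 2) * ‖Q‖ := by ring
    _ ≤ 2 * α + 1 := by
        have hX : 0 ≤ ‖P‖ * (1 - ‖z‖) := mul_nonneg (norm_nonneg P) (by linarith)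
        nlinarith [hω1 z hz]

theorem stmt16 (α : ℝ) (hα : α ∈ Set.Ioc (0:ℝ) 3) (h : ℂ → ℂ) (hF : MemF α h)
    (ω : ℂ → ℂ) (hω : DifferentiableOn ℂ ω (ball 0 1))
    (hω1 : ∀ z ∈ ball (0:ℂ) 1, ‖ω z‖ < 1)
    (g : ℂ → ℂ) (hg : DifferentiableOn ℂ g (ball 0 1)) (hg0 : g 0 = 0)
    (hgd : ∀ z ∈ ball (0:ℂ) 1, deriv g z = ω z * deriv h z) :
    ∀ z ∈ ball (0:ℂ) 1,
      (1 - ‖z‖ ^ 2) *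
        ‖deriv (deriv h) z / deriv h z -
          (starRingEnd ℂ) (ω z) * deriv ω z / ((1 - ‖ω z‖ ^ 2 : ℝ) : ℂ)‖
        ≤ 2 * α + 1 :=
  stmt16_general α h hF ω hω hω1
end
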